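/- (Sufficiency in Theorem 2, part 1.) Suppose there exists a unit vector u ∈ ℂ^m with G u = λ_min u (u is an eigenvector of the Gram matrix for its smallest eigenvalue) such that |u_i|² = η_i for every i. Then the equal-probability measurement is optimal: the constant vector p_i = λ_min is primal feasible, and Σ_i η_i p'_i ≤ λ_min for every primal feasible p'; in particular the maximal detection probability equals λ_min. -/

import Mathlib

/-!
With `R = ΦG⁻¹` we have `Σ Q_i = R Rᴴ`, and with the orthogonal projection `P = R Φᴴ` onto the
span of the states, `1 - λ R Rᴴ = (1 - P)ᴴ (1 - P) + R (G - λ) Rᴴ`, which is positive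
semidefinite because `λ = λ_min`. Conversely, testing the constraint of a feasible `p'` on
`w = Φ u` gives `wᴴ Q_i w = |(Rᴴ Φ u)_i|² = |u_i|² = η_i` and `wᴴ w = uᴴ G u = λ`, hence
`Σ η_i p'_i ≤ λ`.
-/

open Matrix BigOperators ComplexOrder

noncomputable section

/-- The reciprocal states: columns of `Φ (ΦᴴΦ)⁻¹`. -/
def reciprocal {r m : ℕ} (Φ : Matrix (Fin r) (Fin m) ℂ) : Matrix (Fin r) (Fin m) ℂ :=
  Φ * (Φᴴ * Φ)⁻¹

/-- The rank-one operator `Q_i = φ̃_i φ̃_iᴴ`. -/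
def Qop {r m : ℕ} (Φ : Matrix (Fin r) (Fin m) ℂ) (i : Fin m) : Matrix (Fin r) (Fin r) ℂ :=
  vecMulVec (fun a => reciprocal Φ a i) (fun b => star (reciprocal Φ b i))

/-- `p` is primal feasible: `p_i ≥ 0` and `I - Σ p_i Q_i ⪰ 0`. -/
def PrimalFeasible {r m : ℕ} (Φ : Matrix (Fin r) (Fin m) ℂ) (p : Fin m → ℝ) : Prop :=
  (∀ i, 0 ≤ p i) ∧
    ((1 : Matrix (Fin r) (Fin r) ℂ) - ∑ i : Fin m, (p i : ℂ) • Qop Φ i).PosSemidef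

/-- `(X, z)` is dual feasible: `X ⪰ 0`, `z_i ≥ 0` and `Re Tr(Q_i X) = η_i + z_i`. -/
def DualFeasible {r m : ℕ} (Φ : Matrix (Fin r) (Fin m) ℂ) (η : Fin m → ℝ)
    (X : Matrix (Fin r) (Fin r) ℂ) (z : Fin m → ℝ) : Prop :=
  X.PosSemidef ∧ (∀ i, 0 ≤ z i) ∧ ∀ i, (Matrix.trace (Qop Φ i * X)).re = η i + z i

lemma star_dotProduct_vecMulVec_star_mulVec {n : Type*} [Fintype n] (x w : n → ℂ) :
    star w ⬝ᵥ (vecMulVec x (star x) *ᵥ w) = ((‖star x ⬝ᵥ w‖ ^ 2 : ℝ) : ℂ) := by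
  rw [vecMulVec_mulVec, op_smul_eq_smul, dotProduct_smul, star_dotProduct w x, smul_eq_mul,
    Complex.star_def, Complex.mul_conj', Complex.ofReal_pow]

section Reciprocal

variable {r m : ℕ} {Φ : Matrix (Fin r) (Fin m) ℂ}

lemma sum_Qop : ∑ i, Qop Φ i = reciprocal Φ * (reciprocal Φ)ᴴ := by
  ext a b
  simp [Qop, vecMulVec_apply, Matrix.mul_apply, Matrix.sum_apply, conjTranspose_apply]

lemma conjTranspose_reciprocal : (reciprocal Φ)ᴴ = (Φᴴ * Φ)⁻¹ * Φᴴ := by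
  rw [reciprocal, conjTranspose_mul, conjTranspose_nonsing_inv,
    (isHermitian_conjTranspose_mul_self Φ).eq]

variable (hG : IsUnit (Φᴴ * Φ))
include hG

lemma conjTranspose_reciprocal_mul_self : (reciprocal Φ)ᴴ * Φ = 1 := by
  rw [conjTranspose_reciprocal, Matrix.mul_assoc,
    nonsing_inv_mul _ ((isUnit_iff_isUnit_det _).mp hG)]

lemma conjTranspose_mul_reciprocal : Φᴴ * reciprocal Φ = 1 := by
  rw [reciprocal, ← Matrix.mul_assoc, mul_nonsing_inv _ ((isUnit_iff_isUnit_det _).mp hG)]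

lemma one_sub_smul_reciprocal_mul_conjTranspose (c : ℂ) :
    1 - c • (reciprocal Φ * (reciprocal Φ)ᴴ) =
      (1 - reciprocal Φ * Φᴴ)ᴴ * (1 - reciprocal Φ * Φᴴ) +
        reciprocal Φ * (Φᴴ * Φ - c • 1) * (reciprocal Φ)ᴴ := by
  have hPH : (reciprocal Φ * Φᴴ)ᴴ = reciprocal Φ * Φᴴ := by
    rw [conjTranspose_mul, conjTranspose_conjTranspose, conjTranspose_reciprocal,
      ← Matrix.mul_assoc]
    rfl
  have hPP : reciprocal Φ * Φᴴ * (reciprocal Φ * Φᴴ) = reciprocal Φ * Φᴴ := by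
    rw [Matrix.mul_assoc, ← Matrix.mul_assoc Φᴴ, conjTranspose_mul_reciprocal hG, Matrix.one_mul]
  have hGR : Φᴴ * Φ * (reciprocal Φ)ᴴ = Φᴴ := by
    rw [conjTranspose_reciprocal, ← Matrix.mul_assoc,
      mul_nonsing_inv _ ((isUnit_iff_isUnit_det _).mp hG), Matrix.one_mul]
  rw [Matrix.mul_sub (reciprocal Φ), Matrix.sub_mul _ _ (reciprocal Φ)ᴴ,
    Matrix.mul_assoc (reciprocal Φ) (Φᴴ * Φ), hGR, Matrix.mul_smul, Matrix.mul_one,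
    Matrix.smul_mul, conjTranspose_sub, conjTranspose_one, hPH, sub_mul, mul_sub, mul_sub,
    one_mul, mul_one, one_mul, hPP]
  abel

lemma primalFeasible_const {lam : ℝ} (hlam : 0 ≤ lam)
    (hmin : (Φᴴ * Φ - (lam : ℂ) • 1).PosSemidef) :
    PrimalFeasible Φ (fun _ => lam) := by
  refine ⟨fun _ => hlam, ?_⟩
  rw [← Finset.smul_sum, sum_Qop, one_sub_smul_reciprocal_mul_conjTranspose hG]
  exact (posSemidef_conjTranspose_mul_self _).add (hmin.mul_mul_conjTranspose_same _)

lemma re_star_dotProduct_Qop_mulVec (u : Fin m → ℂ) (i : Fin m) :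
    (star (Φ *ᵥ u) ⬝ᵥ (Qop Φ i *ᵥ (Φ *ᵥ u))).re = ‖u i‖ ^ 2 := by
  have hQ : Qop Φ i =
      vecMulVec (fun b => reciprocal Φ b i) (star fun b => reciprocal Φ b i) := rfl
  have hcol : star (fun b => reciprocal Φ b i) ⬝ᵥ (Φ *ᵥ u) = u i := calc
    _ = ((reciprocal Φ)ᴴ *ᵥ (Φ *ᵥ u)) i := rfl
    _ = u i := by rw [mulVec_mulVec, conjTranspose_reciprocal_mul_self hG, one_mulVec]
  rw [hQ, star_dotProduct_vecMulVec_star_mulVec, hcol, Complex.ofReal_re]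

end Reciprocal

lemma PrimalFeasible.sum_mul_re_le {r m : ℕ} {Φ : Matrix (Fin r) (Fin m) ℂ} {p : Fin m → ℝ}
    (hp : PrimalFeasible Φ p) (w : Fin r → ℂ) :
    ∑ i, p i * (star w ⬝ᵥ (Qop Φ i *ᵥ w)).re ≤ (star w ⬝ᵥ w).re := by
  have h := (Complex.nonneg_iff.mp (hp.2.dotProduct_mulVec_nonneg w)).1
  simp only [sub_mulVec, one_mulVec, sum_mulVec, dotProduct_sub, dotProduct_sum, smul_mulVec,
    dotProduct_smul, Complex.sub_re, Complex.re_sum, smul_eq_mul, Complex.re_ofReal_mul] at h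
  linarith

theorem stmt_8_general (m r : ℕ)
    (Φ : Matrix (Fin r) (Fin m) ℂ)
    (hind : LinearIndependent ℂ (fun i : Fin m => fun j : Fin r => Φ j i))
    (η : Fin m → ℝ)
    (lam : ℝ)
    -- `lam` is the smallest eigenvalue of the Gram matrix `ΦᴴΦ`:
    (hmin : ((Φᴴ * Φ) - (lam : ℂ) • 1).PosSemidef)
    -- `u` is a unit eigenvector of `ΦᴴΦ` for `lam` with `|u_i|² = η_i`:
    (u : Fin m → ℂ) (hunit : ∑ i : Fin m, ‖u i‖ ^ 2 = 1)
    (hu : (Φᴴ * Φ).mulVec u = (lam : ℂ) • u)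
    (hup : ∀ i, ‖u i‖ ^ 2 = η i) :
    PrimalFeasible Φ (fun _ => lam) ∧
      ∀ p' : Fin m → ℝ, PrimalFeasible Φ p' → ∑ i : Fin m, η i * p' i ≤ lam := by
  have hG : IsUnit (Φᴴ * Φ) :=
    (PosDef.conjTranspose_mul_self Φ (mulVec_injective_iff.mpr hind)).isUnit
  have hu1 : star u ⬝ᵥ u = 1 := by
    simp only [dotProduct, Pi.star_apply, Complex.star_def, Complex.conj_mul']
    exact_mod_cast hunit
  have hnorm : star (Φ *ᵥ u) ⬝ᵥ (Φ *ᵥ u) = lam := by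
    rw [star_mulVec, ← dotProduct_mulVec, mulVec_mulVec, hu, dotProduct_smul, hu1, smul_eq_mul,
      mul_one]
  have hlam : 0 ≤ lam := Complex.zero_le_real.mp (hnorm ▸ dotProduct_star_self_nonneg _)
  refine ⟨primalFeasible_const hG hlam hmin, fun p hp => ?_⟩
  calc ∑ i, η i * p i = ∑ i, p i * (star (Φ *ᵥ u) ⬝ᵥ (Qop Φ i *ᵥ (Φ *ᵥ u))).re := by
        simp only [re_star_dotProduct_Qop_mulVec hG, hup, mul_comm]
    _ ≤ (star (Φ *ᵥ u) ⬝ᵥ (Φ *ᵥ u)).re := hp.sum_mul_re_le _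
    _ = lam := by rw [hnorm, Complex.ofReal_re]

theorem stmt_8 (m r : ℕ) (hm : 0 < m) (hmr : m ≤ r)
    (Φ : Matrix (Fin r) (Fin m) ℂ)
    (hind : LinearIndependent ℂ (fun i : Fin m => fun j : Fin r => Φ j i))
    (η : Fin m → ℝ) (hη : ∀ i, 0 ≤ η i) (hη1 : ∑ i : Fin m, η i = 1)
    (lam : ℝ)
    -- `lam` is the smallest eigenvalue of the Gram matrix `ΦᴴΦ`:
    (hev : ∃ u : Fin m → ℂ, u ≠ 0 ∧ (Φᴴ * Φ).mulVec u = (lam : ℂ) • u)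
    (hmin : ((Φᴴ * Φ) - (lam : ℂ) • 1).PosSemidef)
    -- `u` is a unit eigenvector of `ΦᴴΦ` for `lam` with `|u_i|² = η_i`:
    (u : Fin m → ℂ) (hunit : ∑ i : Fin m, ‖u i‖ ^ 2 = 1)
    (hu : (Φᴴ * Φ).mulVec u = (lam : ℂ) • u)
    (hup : ∀ i, ‖u i‖ ^ 2 = η i) :
    PrimalFeasible Φ (fun _ => lam) ∧
      ∀ p' : Fin m → ℝ, PrimalFeasible Φ p' → ∑ i : Fin m, η i * p' i ≤ lam :=
  stmt_8_general m r Φ hind η lam hmin u hunit hu hup
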